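/- Let λ > λ_* and let v ∈ C²(ℝ^N) be bounded with v(x) → 0 as |x| → ∞, satisfying v(x)·(Δv(x) + f_∞(x)v(x) − λv(x)) ≥ 0 for all x. Then for every ε ∈ (0, λ − λ_*) there exists C_ε > 0 such that |v(x)| ≤ ‖v‖_∞ · exp(−√(λ − λ_* − ε)·(|x| − C_ε)) for all x ∈ ℝ^N. -/

import Mathlib

/-
Let `μ = λ - λ_* - ε/2` and `k = √(λ - λ_* - ε)`, so `k² < μ`. Outside a ball of radius `R`
we have `f_∞ < λ_* + ε/2`, so wherever `v > 0` there the inequality gives `Δv ≥ μ v`, and the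
same holds for `-v`. The radial barrier `φ = ‖v‖_∞ e^{-k(|x| - R)}` has
`Δφ = (k² - k(N-1)/|x|) φ < μ φ`, dominates `±v` on the sphere `|x| = R`, and is positive while
`v` vanishes at infinity. Hence if `v - φ` were positive somewhere outside the ball, it would
have a positive maximum at an interior point, where the second derivative test gives
`Δv ≤ Δφ < μ φ < μ v ≤ Δv`. Inside the ball the bound is trivial since there `φ ≥ ‖v‖_∞`.
-/

open MeasureTheory Filter Topology

/-- The Laplacian of `u : ℝ^N → ℝ`, as the sum of second partial derivatives. -/
noncomputable def lap {N : ℕ} (u : EuclideanSpace ℝ (Fin N) → ℝ)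
    (x : EuclideanSpace ℝ (Fin N)) : ℝ :=
  ∑ i, fderiv ℝ (fun y => fderiv ℝ u y (EuclideanSpace.single i 1)) x
    (EuclideanSpace.single i 1)

theorem IsLocalMax.deriv_deriv_nonpos {ψ : ℝ → ℝ} {a : ℝ} (hmax : IsLocalMax ψ a)
    (hc : ContinuousAt ψ a) : deriv (deriv ψ) a ≤ 0 := by
  by_contra! hpos
  have hmin := isLocalMin_of_deriv_deriv_pos hpos hmax.deriv_eq_zero hc
  have hconst : ψ =ᶠ[𝓝 a] fun _ => ψ a := by
    filter_upwards [hmax, hmin] with t h₁ h₂ using le_antisymm h₁ h₂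
  have : deriv (deriv ψ) a = 0 := by
    rw [hconst.deriv.deriv_eq]
    simp
  linarith

theorem hasDerivAt_mul_exp_neg_mul_sqrt (c k : ℝ) {s : ℝ} (hs : 0 < s) :
    HasDerivAt (fun t => c * Real.exp (-k * √t))
      (c * Real.exp (-k * √s) * (-k / (2 * √s))) s :=
  ((((Real.hasDerivAt_sqrt hs.ne').const_mul (-k)).exp).const_mul c).congr_deriv (by ring)

theorem hasDerivAt_deriv_mul_exp_neg_mul_sqrt (c k : ℝ) {s : ℝ} (hs : 0 < s) :
    HasDerivAt (fun t => c * Real.exp (-k * √t) * (-k / (2 * √t)))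
      (c * Real.exp (-k * √s) * (k ^ 2 / (4 * s) + k / (4 * s * √s))) s := by
  refine ((hasDerivAt_mul_exp_neg_mul_sqrt c k hs).fun_mul ((hasDerivAt_const s (-k)).fun_div
    ((Real.hasDerivAt_sqrt hs.ne').const_mul 2) (by positivity))).congr_deriv ?_
  have hss : √s ^ 2 = s := Real.sq_sqrt hs.le
  field_simp
  rw [hss]
  ring

section Calculus

variable {E : Type*} [NormedAddCommGroup E] [NormedSpace ℝ E] {u : E → ℝ} {x : E}

theorem ContDiffAt.eventually_differentiableAt (hu : ContDiffAt ℝ 2 u x) :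
    ∀ᶠ y in 𝓝 x, DifferentiableAt ℝ u y :=
  (hu.eventually (by simp)).mono fun _ hy => hy.differentiableAt two_ne_zero

theorem ContDiffAt.differentiableAt_fderiv_apply (hu : ContDiffAt ℝ 2 u x) (e : E) :
    DifferentiableAt ℝ (fun y => fderiv ℝ u y e) x :=
  ((hu.fderiv_right (m := 1) le_rfl).clm_apply contDiffAt_const).differentiableAt one_ne_zero

theorem IsLocalMax.fderiv_fderiv_apply_nonpos (hu : ContDiffAt ℝ 2 u x) (hmax : IsLocalMax u x)
    (e : E) : fderiv ℝ (fun y => fderiv ℝ u y e) x e ≤ 0 := by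
  set ψ : ℝ → ℝ := fun t => u (x + t • e)
  have hline (t : ℝ) : HasDerivAt (fun t : ℝ => x + t • e) e t := by
    simpa using ((hasDerivAt_id t).smul_const e).const_add x
  have hline0 : ContinuousAt (fun t : ℝ => x + t • e) 0 := (hline 0).continuousAt
  have hψ' : deriv ψ =ᶠ[𝓝 0] fun t => fderiv ℝ u (x + t • e) e := by
    filter_upwards [hline0.eventually (by simpa using hu.eventually_differentiableAt)] with t ht
    exact (ht.hasFDerivAt.comp_hasDerivAt t (hline t)).deriv
  have hψ'' : deriv (deriv ψ) 0 = fderiv ℝ (fun y => fderiv ℝ u y e) x e := by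
    rw [hψ'.deriv_eq]
    exact ((hu.differentiableAt_fderiv_apply e).hasFDerivAt.comp_hasDerivAt_of_eq (0 : ℝ)
      (hline 0) (by simp)).deriv
  have hψmax : IsLocalMax ψ 0 :=
    IsLocalMax.comp_continuous (g := fun t : ℝ => x + t • e) (by simpa using hmax) hline0
  rw [← hψ'']
  exact hψmax.deriv_deriv_nonpos (hu.continuousAt.comp_of_eq hline0 (by simp))

end Calculus

theorem exists_pos_forall_norm_ge_lt_of_limsup_lt {E : Type*} [NormedAddCommGroup E]
    [ProperSpace E] {f : E → ℝ} {b : ℝ} (hf : IsBoundedUnder (· ≤ ·) (cocompact E) f)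
    (h : limsup f (cocompact E) < b) : ∃ R > 0, ∀ x, R ≤ ‖x‖ → f x < b := by
  have hev := eventually_lt_of_limsup_lt h hf
  rw [← Metric.cobounded_eq_cocompact, hasBasis_cobounded_norm.eventually_iff] at hev
  obtain ⟨R, -, hR⟩ := hev
  exact ⟨max R 1, by positivity, fun x hx => hR ((le_max_left R 1).trans hx)⟩

section Laplacian

variable {N : ℕ}

local notation "ℝᴺ" => EuclideanSpace ℝ (Fin N)

theorem lap_neg (u : ℝᴺ → ℝ) (x : ℝᴺ) : lap (fun y => -u y) x = -lap u x := by
  simp only [lap, fderiv_fun_neg, neg_apply, Finset.sum_neg_distrib]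

theorem lap_sub {u w : ℝᴺ → ℝ} {x : ℝᴺ} (hu : ContDiffAt ℝ 2 u x) (hw : ContDiffAt ℝ 2 w x) :
    lap (fun y => u y - w y) x = lap u x - lap w x := by
  rw [lap, lap, lap, ← Finset.sum_sub_distrib]
  refine Finset.sum_congr rfl fun i _ => ?_
  set e : ℝᴺ := EuclideanSpace.single i 1
  have hfd : (fun y => fderiv ℝ (fun z => u z - w z) y e)
      =ᶠ[𝓝 x] fun y => fderiv ℝ u y e - fderiv ℝ w y e := by
    filter_upwards [hu.eventually_differentiableAt, hw.eventually_differentiableAt]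
      with y huy hwy
    rw [fderiv_fun_sub huy hwy, sub_apply]
  rw [hfd.fderiv_eq, fderiv_fun_sub (hu.differentiableAt_fderiv_apply e)
    (hw.differentiableAt_fderiv_apply e), sub_apply]

theorem lap_comp {F : ℝ → ℝ} {u : ℝᴺ → ℝ} {x : ℝᴺ} (hF : ContDiffAt ℝ 2 F (u x))
    (hu : ContDiffAt ℝ 2 u x) :
    lap (fun y => F (u y)) x = deriv (deriv F) (u x) *
      ∑ i, (fderiv ℝ u x (EuclideanSpace.single i 1)) ^ 2 + deriv F (u x) * lap u x := by
  rw [lap, lap, Finset.mul_sum, Finset.mul_sum, ← Finset.sum_add_distrib]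
  refine Finset.sum_congr rfl fun i _ => ?_
  set e : ℝᴺ := EuclideanSpace.single i 1
  have hchain : (fun y => fderiv ℝ (fun z => F (u z)) y e)
      =ᶠ[𝓝 x] fun y => deriv F (u y) * fderiv ℝ u y e := by
    filter_upwards [hu.eventually_differentiableAt,
      hu.continuousAt.eventually hF.eventually_differentiableAt] with y huy hFy
    exact congrArg (fun L => L e) (hFy.hasDerivAt.comp_hasFDerivAt y huy.hasFDerivAt).fderiv
  have hF' : HasFDerivAt (fun y => deriv F (u y))
      (deriv (deriv F) (u x) • fderiv ℝ u x) x :=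
    (hF.differentiableAt_fderiv_apply 1).hasDerivAt.comp_hasFDerivAt x
      (hu.differentiableAt two_ne_zero).hasFDerivAt
  rw [hchain.fderiv_eq, (hF'.fun_mul (hu.differentiableAt_fderiv_apply e).hasFDerivAt).fderiv]
  simp only [add_apply, smul_apply, smul_eq_mul]
  ring

theorem fderiv_norm_sq_apply_single (x : ℝᴺ) (i : Fin N) :
    fderiv ℝ (fun y : ℝᴺ => ‖y‖ ^ 2) x (EuclideanSpace.single i 1) = 2 * x i := by
  simp [fderiv_norm_sq_apply, EuclideanSpace.inner_single_right]

theorem sum_fderiv_norm_sq_apply_single_sq (x : ℝᴺ) :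
    ∑ i, (fderiv ℝ (fun y : ℝᴺ => ‖y‖ ^ 2) x (EuclideanSpace.single i 1)) ^ 2 = 4 * ‖x‖ ^ 2 := by
  rw [EuclideanSpace.real_norm_sq_eq, Finset.mul_sum]
  exact Finset.sum_congr rfl fun i _ => by rw [fderiv_norm_sq_apply_single]; ring

theorem lap_norm_sq (x : ℝᴺ) : lap (fun y : ℝᴺ => ‖y‖ ^ 2) x = 2 * N := by
  have hproj (i : Fin N) : HasFDerivAt (fun y : ℝᴺ => 2 * y i)
      ((2 : ℝ) • (EuclideanSpace.proj i : ℝᴺ →L[ℝ] ℝ)) x :=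
    ((EuclideanSpace.proj (𝕜 := ℝ) i).hasFDerivAt (x := x)).const_mul (2 : ℝ)
  simp only [lap, fderiv_norm_sq_apply_single, fun i => (hproj i).fderiv]
  simp [mul_comm]

theorem lap_mul_exp_neg_mul_norm (c k : ℝ) {x : ℝᴺ} (hx : x ≠ 0) :
    lap (fun y : ℝᴺ => c * Real.exp (-k * ‖y‖)) x =
      (k ^ 2 - k * (N - 1) / ‖x‖) * (c * Real.exp (-k * ‖x‖)) := by
  -- Unlike the norm, `‖·‖²` is smooth everywhere: write the barrier as `F (‖y‖²)`.
  set F : ℝ → ℝ := fun s => c * Real.exp (-k * √s)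
  have hr : 0 < ‖x‖ := norm_pos_iff.2 hx
  have hs : 0 < ‖x‖ ^ 2 := by positivity
  have hsqrt : √(‖x‖ ^ 2) = ‖x‖ := Real.sqrt_sq hr.le
  have hF : ContDiffAt ℝ 2 F (‖x‖ ^ 2) :=
    contDiffAt_const.mul (Real.contDiff_exp.contDiffAt.comp _
      (contDiffAt_const.mul (Real.contDiffAt_sqrt hs.ne')))
  have hF' : deriv F =ᶠ[𝓝 (‖x‖ ^ 2)] fun t => c * Real.exp (-k * √t) * (-k / (2 * √t)) := by
    filter_upwards [eventually_gt_nhds hs] with t ht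
    exact (hasDerivAt_mul_exp_neg_mul_sqrt c k ht).deriv
  have hcomp : (fun y : ℝᴺ => c * Real.exp (-k * ‖y‖)) = fun y => F (‖y‖ ^ 2) := by
    funext y
    simp only [F, Real.sqrt_sq (norm_nonneg y)]
  rw [hcomp, lap_comp hF (contDiff_norm_sq ℝ).contDiffAt, hF'.deriv_eq,
    (hasDerivAt_deriv_mul_exp_neg_mul_sqrt c k hs).deriv, hF'.eq_of_nhds,
    sum_fderiv_norm_sq_apply_single_sq, lap_norm_sq, hsqrt]
  field_simp
  ring

theorem lap_mul_exp_neg_mul_norm_le {c k : ℝ} (hc : 0 ≤ c) (hk : 0 ≤ k) {x : ℝᴺ} (hx : x ≠ 0) :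
    lap (fun y : ℝᴺ => c * Real.exp (-k * ‖y‖)) x ≤ k ^ 2 * (c * Real.exp (-k * ‖x‖)) := by
  have hN : (1 : ℝ) ≤ N := by
    norm_cast
    rw [Nat.one_le_iff_ne_zero]
    rintro rfl
    exact hx (Subsingleton.elim _ _)
  rw [lap_mul_exp_neg_mul_norm c k hx]
  have : 0 ≤ k * (N - 1) / ‖x‖ := by
    have := norm_nonneg x
    have : 0 ≤ (N : ℝ) - 1 := by linarith
    positivity
  have : 0 ≤ c * Real.exp (-k * ‖x‖) := by positivity
  nlinarith

theorem lap_nonpos_of_isLocalMax {u : ℝᴺ → ℝ} {x : ℝᴺ} (hu : ContDiffAt ℝ 2 u x)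
    (hmax : IsLocalMax u x) : lap u x ≤ 0 :=
  Finset.sum_nonpos fun _ _ => IsLocalMax.fderiv_fderiv_apply_nonpos hu hmax _

theorem le_on_exterior_of_lap_comparison {w φ : ℝᴺ → ℝ} {R μ : ℝ} (hμ : 0 ≤ μ)
    (hw : ContDiff ℝ 2 w) (hw0 : Tendsto w (cocompact ℝᴺ) (𝓝 0))
    (hφ : ContinuousOn φ {x | R ≤ ‖x‖}) (hφpos : ∀ x, R ≤ ‖x‖ → 0 < φ x)
    (hφ2 : ∀ x, R < ‖x‖ → ContDiffAt ℝ 2 φ x)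
    (hφlap : ∀ x, R < ‖x‖ → lap φ x < μ * φ x)
    (hwlap : ∀ x, R < ‖x‖ → 0 < w x → μ * w x ≤ lap w x)
    (hbdry : ∀ x, ‖x‖ = R → w x ≤ φ x) {x : ℝᴺ} (hx : R ≤ ‖x‖) : w x ≤ φ x := by
  by_contra! hlt
  set T : Set ℝᴺ := {y | R ≤ ‖y‖}
  have hfar : ∀ᶠ y in cocompact ℝᴺ ⊓ 𝓟 T, w y - φ y ≤ w x - φ x := by
    have : ∀ᶠ y in cocompact ℝᴺ, w y < w x - φ x :=
      hw0.eventually (eventually_lt_nhds (by linarith))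
    filter_upwards [this.filter_mono inf_le_left, mem_inf_of_right (mem_principal_self T)]
      with y hy hyT
    linarith [hφpos y hyT]
  obtain ⟨x₀, hx₀T, hmax⟩ := (hw.continuous.continuousOn.sub hφ).exists_isMaxOn'
    (isClosed_le continuous_const continuous_norm) hx hfar
  have hgt : φ x₀ < w x₀ := by
    have : w x - φ x ≤ w x₀ - φ x₀ := hmax hx
    linarith
  have hR : R < ‖x₀‖ := lt_of_le_of_ne hx₀T fun h => (hbdry x₀ h.symm).not_gt hgt
  have hloc : IsLocalMax (fun y => w y - φ y) x₀ := hmax.isLocalMax <|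
    mem_of_superset ((isOpen_lt continuous_const continuous_norm).mem_nhds hR)
      fun y (hy : R < ‖y‖) => show R ≤ ‖y‖ from hy.le
  have hlap := lap_nonpos_of_isLocalMax (hw.contDiffAt.sub (hφ2 x₀ hR)) hloc
  rw [lap_sub hw.contDiffAt (hφ2 x₀ hR)] at hlap
  have := hwlap x₀ hR (by linarith [hφpos x₀ hx₀T])
  have := hφlap x₀ hR
  nlinarith [mul_le_mul_of_nonneg_left hgt.le hμ]

theorem le_mul_exp_neg_of_lap_ge {w : ℝᴺ → ℝ} {R S k μ : ℝ} (hR : 0 ≤ R) (hS : 0 < S)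
    (hk : 0 ≤ k) (hkμ : k ^ 2 < μ) (hw : ContDiff ℝ 2 w)
    (hw0 : Tendsto w (cocompact ℝᴺ) (𝓝 0))
    (hwlap : ∀ x, R < ‖x‖ → 0 < w x → μ * w x ≤ lap w x)
    (hbdry : ∀ x, ‖x‖ = R → w x ≤ S) {x : ℝᴺ} (hx : R ≤ ‖x‖) :
    w x ≤ S * Real.exp (-k * (‖x‖ - R)) := by
  set c := S * Real.exp (k * R)
  have hc : 0 < c := by positivity
  have hφ (y : ℝᴺ) : S * Real.exp (-k * (‖y‖ - R)) = c * Real.exp (-k * ‖y‖) := by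
    rw [mul_assoc, ← Real.exp_add]
    ring_nf
  rw [hφ]
  have hne (y : ℝᴺ) (hy : R < ‖y‖) : y ≠ 0 := norm_pos_iff.1 (hR.trans_lt hy)
  refine le_on_exterior_of_lap_comparison (φ := fun y => c * Real.exp (-k * ‖y‖))
    ((sq_nonneg k).trans_lt hkμ).le hw hw0
    (by fun_prop) (fun y _ => by positivity) (fun y hy => ?_) (fun y hy => ?_) hwlap
    (fun y hy => by rw [← hφ, hy, sub_self, mul_zero, Real.exp_zero, mul_one]; exact hbdry y hy) hx
  · exact contDiffAt_const.mul (Real.contDiff_exp.contDiffAt.comp _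
      (contDiffAt_const.mul (contDiffAt_norm ℝ (hne y hy))))
  · calc lap (fun y : ℝᴺ => c * Real.exp (-k * ‖y‖)) y
        ≤ k ^ 2 * (c * Real.exp (-k * ‖y‖)) := lap_mul_exp_neg_mul_norm_le hc.le hk (hne y hy)
      _ < μ * (c * Real.exp (-k * ‖y‖)) := by gcongr

end Laplacian

theorem stmt2_general {N : ℕ}
    (f : EuclideanSpace ℝ (Fin N) → ℝ) (hfb : ∃ M, ∀ x, |f x| ≤ M)
    (lamStar lam : ℝ) (hstar : lamStar = limsup f (cocompact (EuclideanSpace ℝ (Fin N))))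
    (v : EuclideanSpace ℝ (Fin N) → ℝ) (hv : ContDiff ℝ 2 v)
    (hvb : ∃ M, ∀ x, |v x| ≤ M)
    (hv0 : Tendsto v (cocompact (EuclideanSpace ℝ (Fin N))) (nhds 0))
    (hineq : ∀ x, 0 ≤ v x * (lap v x + f x * v x - lam * v x)) :
    ∀ ε, 0 < ε → ε < lam - lamStar → ∃ C, 0 < C ∧ ∀ x,
      |v x| ≤ (⨆ y, |v y|) * Real.exp (-Real.sqrt (lam - lamStar - ε) * (‖x‖ - C)) := by
  intro ε hε hεlt
  set k := √(lam - lamStar - ε)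
  set S := ⨆ y, |v y|
  obtain ⟨M, hM⟩ := hvb
  have hS : ∀ y, |v y| ≤ S := le_ciSup ⟨M, by rintro _ ⟨z, rfl⟩; exact hM z⟩
  obtain ⟨Mf, hMf⟩ := hfb
  obtain ⟨R, hR, hfR⟩ := exists_pos_forall_norm_ge_lt_of_limsup_lt (b := lamStar + ε / 2)
    (isBoundedUnder_of ⟨Mf, fun x => (le_abs_self _).trans (hMf x)⟩) (by rw [← hstar]; linarith)
  refine ⟨R, hR, fun x => ?_⟩
  obtain hS0 | hSpos := ((abs_nonneg _).trans (hS 0)).eq_or_lt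
  · simpa [← hS0] using hS x
  have hdecay (w : EuclideanSpace ℝ (Fin N) → ℝ) (hw : ContDiff ℝ 2 w)
      (hw0 : Tendsto w (cocompact _) (𝓝 0)) (hwS : ∀ y, w y ≤ S)
      (hwineq : ∀ y, 0 ≤ w y * (lap w y + f y * w y - lam * w y)) (hx : R ≤ ‖x‖) :
      w x ≤ S * Real.exp (-k * (‖x‖ - R)) := by
    refine le_mul_exp_neg_of_lap_ge (μ := lam - lamStar - ε / 2) hR.le hSpos
      (Real.sqrt_nonneg _) (by rw [Real.sq_sqrt (by linarith)]; linarith) hw hw0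
      (fun y hy hwy => ?_) (fun y _ => hwS y) hx
    have := nonneg_of_mul_nonneg_right (hwineq y) hwy
    nlinarith [hfR y hy.le]
  have hpos := hdecay v hv hv0 (fun y => (le_abs_self _).trans (hS y)) hineq
  have hneg := hdecay (fun y => -v y) hv.neg (by simpa using hv0.neg)
    (fun y => (neg_le_abs _).trans (hS y)) (fun y => by rw [lap_neg]; linarith [hineq y])
  by_cases hx : R ≤ ‖x‖
  · exact abs_le.2 ⟨by linarith [hneg hx], hpos hx⟩
  · have : 0 ≤ -k * (‖x‖ - R) :=
      mul_nonneg_of_nonpos_of_nonpos (neg_nonpos.2 (Real.sqrt_nonneg _)) (by linarith)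
    exact (hS x).trans (le_mul_of_one_le_right hSpos.le (Real.one_le_exp this))

/-- exponential decay estimate. If `λ > λ_* = limsup_{|x|→∞} f_∞(x)` and the
bounded `C²` function `v`, vanishing at infinity, satisfies
`v·(Δv + f_∞ v − λ v) ≥ 0` on `ℝ^N`, then for every `ε ∈ (0, λ − λ_*)` there is `C_ε > 0`
with `|v(x)| ≤ ‖v‖_∞ exp(−√(λ − λ_* − ε)(|x| − C_ε))` for all `x`. -/
theorem stmt2 {N : ℕ} (hN : 1 ≤ N)
    (f : EuclideanSpace ℝ (Fin N) → ℝ) (hfc : Continuous f) (hfb : ∃ M, ∀ x, |f x| ≤ M)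
    (lamStar lam : ℝ) (hstar : lamStar = limsup f (cocompact (EuclideanSpace ℝ (Fin N))))
    (hlam : lamStar < lam)
    (v : EuclideanSpace ℝ (Fin N) → ℝ) (hv : ContDiff ℝ 2 v)
    (hvb : ∃ M, ∀ x, |v x| ≤ M)
    (hv0 : Tendsto v (cocompact (EuclideanSpace ℝ (Fin N))) (nhds 0))
    (hineq : ∀ x, 0 ≤ v x * (lap v x + f x * v x - lam * v x)) :
    ∀ ε, 0 < ε → ε < lam - lamStar → ∃ C, 0 < C ∧ ∀ x,
      |v x| ≤ (⨆ y, |v y|) * Real.exp (-Real.sqrt (lam - lamStar - ε) * (‖x‖ - C)) :=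
  stmt2_general f hfb lamStar lam hstar v hv hvb hv0 hineq
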